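/- arXiv:1203.0922 — 3 statements merged into one kernel-verified Lean document; each statement's English description precedes it below -/
import Mathlib

section
/- Let F_m(q) := Σ_{σ ∈ S_m} q^{aid(σ)}. For every n ≥ 2 and every j ∈ [n], the sum Σ q^{aid(σ)}, taken over all σ ∈ S_n with σ(n−j+1) = n, equals: F_{n−1}(q) if j = 1; the Gaussian binomial coefficient [n−1 choose j−1]_q times q^j·F_{j−1}(q)·F_{n−j}(q) if 2 ≤ j ≤ n−1; and q·F_{n−1}(q) if j = n. -/
/-!
Write `n = p + 1 + b`, so that the maximal letter sits at position `p` (0-indexed). Such a `σ` is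
determined by the set `S` of the `b` letters to the right of the maximum together with the
standardizations `α ∈ S_p` and `β ∈ S_b` of the two sides, and the maximum decouples them: an
inversion from the left side to the right side is always admissible (the maximum lies in
between), an inversion starting at the maximum is admissible iff `p > 0`, the maximum gives a
descent iff `b > 0`, and inside each side the statistics are those of `α` and `β` (the letter just
after the maximum cannot be preceded by a smaller letter). Hence
`aid σ = aid α + aid β + cross S + [p > 0] b + [b > 0]`, where `cross S` counts the pairs
`x ∈ S`, `y ∉ S` with `x < y`, and summing `q ^ cross S` over the `b`-subsets of `[0, p + b)`
gives the Gaussian binomial by the q-Pascal recurrence.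
-/

attribute [local instance] Classical.propDecidable

open Polynomial

/-- The number of descents of the word `w = w₁ ⋯ w_m`:
indices `i ∈ [m-1]` with `w_i > w_{i+1}`. -/
noncomputable def desF {m : ℕ} (w : Fin m → ℕ) : ℕ :=
  (Finset.univ.filter fun i : Fin (m - 1) =>
      w ⟨(i : ℕ) + 1, by have := i.2; omega⟩ < w ⟨(i : ℕ), by have := i.2; omega⟩).card

/-- The major index of the word `w = w₁ ⋯ w_m`: the sum of the (1-indexed) descent
positions. -/
noncomputable def majF {m : ℕ} (w : Fin m → ℕ) : ℕ :=
  ∑ i ∈ (Finset.univ.filter fun i : Fin (m - 1) =>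
      w ⟨(i : ℕ) + 1, by have := i.2; omega⟩ < w ⟨(i : ℕ), by have := i.2; omega⟩),
    ((i : ℕ) + 1)

/-- The number of inversions of the word `w`: pairs of positions `i < j` with
`w_i > w_j`. -/
noncomputable def invW {m : ℕ} (w : Fin m → ℕ) : ℕ :=
  (Finset.univ.filter fun p : Fin m × Fin m => p.1 < p.2 ∧ w p.2 < w p.1).card

/-- The number of admissible inversions of the word `w`: inversions `(w_i, w_j)`
(`i < j`, `w_i > w_j`) such that either `i > 1` and `w_{i-1} < w_i`, or there is a `k`
with `i < k < j` and `w_i < w_k`. -/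
noncomputable def aiW {m : ℕ} (w : Fin m → ℕ) : ℕ :=
  (Finset.univ.filter fun p : Fin m × Fin m =>
      p.1 < p.2 ∧ w p.2 < w p.1 ∧
        ((0 < (p.1 : ℕ) ∧ w ⟨(p.1 : ℕ) - 1, by have := p.1.2; omega⟩ < w p.1) ∨
          ∃ k : Fin m, p.1 < k ∧ k < p.2 ∧ w p.1 < w k)).card

/-- The permutation `σ ∈ S_n` viewed as the word `σ(1) σ(2) ⋯ σ(n)`. -/
def permWord {n : ℕ} (σ : Equiv.Perm (Fin n)) : Fin n → ℕ := fun i => (σ i : ℕ)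

/-- The number of excedances of `σ ∈ S_n`: positions `i` with `σ(i) > i`. -/
noncomputable def excP {n : ℕ} (σ : Equiv.Perm (Fin n)) : ℕ :=
  (Finset.univ.filter fun i : Fin n => (i : ℕ) < (σ i : ℕ)).card

/-- `aid σ = ai σ + des σ`: the number of admissible inversions of `σ` plus the number
of descents of `σ`. -/
noncomputable def aidP {n : ℕ} (σ : Equiv.Perm (Fin n)) : ℕ :=
  aiW (permWord σ) + desF (permWord σ)

/-- The Gaussian (q-binomial) coefficient `[n choose k]_q`, defined by the q-Pascal
recurrence `[n+1 choose k+1]_q = [n choose k]_q + q^{k+1} [n choose k+1]_q`. -/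
noncomputable def qBinom : ℕ → ℕ → Polynomial ℤ
  | _, 0 => 1
  | 0, _ + 1 => 0
  | n + 1, k + 1 => qBinom n k + Polynomial.X ^ (k + 1) * qBinom n (k + 1)

/-- `F_m(q) = ∑_{σ ∈ S_m} q^{aid σ}`. -/
noncomputable def aidGen (m : ℕ) : Polynomial ℤ :=
  ∑ σ : Equiv.Perm (Fin m), Polynomial.X ^ aidP σ

open Finset Equiv

-- Words are read on the positions `[0, m)` of a function `ℕ → ℕ`, so that the part of `W`
-- to the right of position `p` is simply `fun t => W (p + 1 + t)`.
def IsAdmInv (W : ℕ → ℕ) (i j : ℕ) : Prop :=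
  i < j ∧ W j < W i ∧ ((0 < i ∧ W (i - 1) < W i) ∨ ∃ k, i < k ∧ k < j ∧ W i < W k)

noncomputable def wordAi (W : ℕ → ℕ) (m : ℕ) : ℕ :=
  ∑ i ∈ range m, ∑ j ∈ range m, if IsAdmInv W i j then 1 else 0

noncomputable def wordDes (W : ℕ → ℕ) (m : ℕ) : ℕ :=
  ∑ i ∈ range m, if i + 1 < m ∧ W (i + 1) < W i then 1 else 0

section Transfer

variable {m : ℕ} (w : Fin m → ℕ) (W : ℕ → ℕ)

lemma aiW_eq_wordAi (hW : ∀ i j : Fin m, W i < W j ↔ w i < w j) : aiW w = wordAi W m := by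
  rw [aiW, card_filter, ← univ_product_univ, sum_product, wordAi, ← Fin.sum_univ_eq_sum_range]
  refine sum_congr rfl fun i _ => ?_
  rw [← Fin.sum_univ_eq_sum_range]
  refine sum_congr rfl fun j _ => if_congr ?_ rfl rfl
  have hprev : ∀ h : 0 < (i : ℕ), (W (i - 1) < W i ↔ w ⟨i - 1, by omega⟩ < w i) :=
    fun _ => hW ⟨i - 1, by omega⟩ i
  simp only [IsAdmInv, Fin.lt_def, hW, Fin.exists_iff]
  constructor
  · rintro ⟨hij, hji, ⟨h0, hd⟩ | ⟨k, hk, hik, hkj, hwk⟩⟩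
    · exact ⟨hij, hji, .inl ⟨h0, (hprev h0).2 hd⟩⟩
    · exact ⟨hij, hji, .inr ⟨k, hik, hkj, (hW i ⟨k, hk⟩).2 hwk⟩⟩
  · rintro ⟨hij, hji, ⟨h0, hd⟩ | ⟨k, hik, hkj, hwk⟩⟩
    · exact ⟨hij, hji, .inl ⟨h0, (hprev h0).1 hd⟩⟩
    · exact ⟨hij, hji, .inr ⟨k, by omega, hik, hkj, (hW i ⟨k, by omega⟩).1 hwk⟩⟩

lemma desF_eq_wordDes (hW : ∀ i j : Fin m, W i < W j ↔ w i < w j) : desF w = wordDes W m := by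
  have hrange : (range m).filter (fun i => i + 1 < m) = range (m - 1) := by
    ext i
    simp only [mem_filter, mem_range]
    omega
  have hterm : ∀ i : Fin (m - 1),
      (w ⟨i + 1, by omega⟩ < w ⟨i, by omega⟩ ↔ W (i + 1) < W i) :=
    fun i => (hW ⟨i + 1, by omega⟩ ⟨i, by omega⟩).symm
  rw [desF, card_filter]
  simp only [hterm]
  rw [Fin.sum_univ_eq_sum_range (fun i => if W (i + 1) < W i then 1 else 0), ← hrange,
    sum_filter, wordDes]
  simp only [ite_and]

end Transfer

lemma aidP_eq_wordAi_add_wordDes {m : ℕ} (σ : Perm (Fin m)) (W : ℕ → ℕ)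
    (hW : ∀ i j : Fin m, W i < W j ↔ σ i < σ j) : aidP σ = wordAi W m + wordDes W m := by
  have hW' : ∀ i j : Fin m, W i < W j ↔ permWord σ i < permWord σ j := hW
  rw [aidP, aiW_eq_wordAi _ W hW', desF_eq_wordDes _ W hW']

section SplitAtMax

variable {W : ℕ → ℕ} {p b : ℕ}

lemma not_isAdmInv_max (hmax : ∀ i < p + 1 + b, i ≠ p → W i < W p) {i : ℕ}
    (hi : i < p + 1 + b) : ¬ IsAdmInv W i p := by
  rintro ⟨hip, hpi, -⟩
  exact absurd (hmax i hi (by omega)) (by omega)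

lemma isAdmInv_left_right_iff (hmax : ∀ i < p + 1 + b, i ≠ p → W i < W p) {i t : ℕ}
    (hi : i < p) : IsAdmInv W i (p + 1 + t) ↔ W (p + 1 + t) < W i :=
  ⟨fun h => h.2.1,
    fun h => ⟨by omega, h, .inr ⟨p, hi, by omega, hmax i (by omega) (by omega)⟩⟩⟩

lemma isAdmInv_max_right_iff (hmax : ∀ i < p + 1 + b, i ≠ p → W i < W p) {t : ℕ}
    (ht : t < b) : IsAdmInv W p (p + 1 + t) ↔ 0 < p := by
  constructor
  · rintro ⟨-, -, ⟨h0, -⟩ | ⟨k, hpk, hkt, hk⟩⟩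
    · exact h0
    · exact absurd (hmax k (by omega) (by omega)) (by omega)
  · exact fun h0 => ⟨by omega, hmax _ (by omega) (by omega),
      .inl ⟨h0, hmax (p - 1) (by omega) (by omega)⟩⟩

lemma isAdmInv_right_iff (hmax : ∀ i < p + 1 + b, i ≠ p → W i < W p) {s t : ℕ}
    (hs : s < b) :
    IsAdmInv W (p + 1 + s) (p + 1 + t) ↔ IsAdmInv (fun t => W (p + 1 + t)) s t := by
  have hprev : 0 < s ∧ W (p + 1 + (s - 1)) < W (p + 1 + s) ↔
      W (p + 1 + s - 1) < W (p + 1 + s) := by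
    rcases Nat.eq_zero_or_pos s with rfl | h0
    · simpa using (hmax (p + 1) (by omega) (by omega)).le
    · rw [show p + 1 + s - 1 = p + 1 + (s - 1) by omega]
      simp [h0]
  have hbetween : (∃ k, p + 1 + s < k ∧ k < p + 1 + t ∧ W (p + 1 + s) < W k) ↔
      ∃ k, s < k ∧ k < t ∧ W (p + 1 + s) < W (p + 1 + k) :=
    ⟨fun ⟨k, h1, h2, h3⟩ => ⟨k - (p + 1), by omega, by omega,
        by rwa [Nat.add_sub_cancel' (by omega)]⟩,
      fun ⟨k, h1, h2, h3⟩ => ⟨p + 1 + k, by omega, by omega, h3⟩⟩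
  simp only [IsAdmInv, add_lt_add_iff_left, hbetween, ← hprev,
    show 0 < p + 1 + s from by omega, true_and]

lemma wordAi_split_of_max (hmax : ∀ i < p + 1 + b, i ≠ p → W i < W p) :
    wordAi W (p + 1 + b) = wordAi W p + wordAi (fun t => W (p + 1 + t)) b
      + (if 0 < p then b else 0)
      + ∑ i ∈ range p, ∑ t ∈ range b, if W (p + 1 + t) < W i then 1 else 0 := by
  have hrow : ∀ i, ∑ j ∈ range (p + 1 + b), (if IsAdmInv W i j then 1 else 0) =
      ∑ j ∈ range p, (if IsAdmInv W i j then 1 else 0) + (if IsAdmInv W i p then 1 else 0)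
        + ∑ t ∈ range b, if IsAdmInv W i (p + 1 + t) then 1 else 0 := fun i => by
    rw [sum_range_add, sum_range_succ]
  have hleft : ∀ i ∈ range p, ∑ j ∈ range (p + 1 + b), (if IsAdmInv W i j then 1 else 0) =
      ∑ j ∈ range p, (if IsAdmInv W i j then 1 else 0)
        + ∑ t ∈ range b, if W (p + 1 + t) < W i then 1 else 0 := fun i hi => by
    rw [mem_range] at hi
    simp only [hrow, if_neg (not_isAdmInv_max hmax (i := i) (by omega)),
      isAdmInv_left_right_iff hmax hi, add_zero]
  have hcenter : ∑ j ∈ range (p + 1 + b), (if IsAdmInv W p j then 1 else 0) =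
      if 0 < p then b else 0 := by
    rw [hrow, if_neg (not_isAdmInv_max hmax (by omega)),
      sum_eq_zero fun j hj => if_neg fun h => by have := h.1; simp at hj; omega,
      sum_congr rfl fun t ht => if_congr (isAdmInv_max_right_iff hmax (by simpa using ht)) rfl rfl]
    split_ifs <;> simp
  have hright : ∀ s ∈ range b,
      ∑ j ∈ range (p + 1 + b), (if IsAdmInv W (p + 1 + s) j then 1 else 0) =
      ∑ t ∈ range b, if IsAdmInv (fun t => W (p + 1 + t)) s t then 1 else 0 := fun s hs => by
    rw [mem_range] at hs
    rw [hrow, if_neg (not_isAdmInv_max hmax (by omega)),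
      sum_eq_zero fun j hj => if_neg fun h => by have := h.1; simp at hj; omega]
    simp only [isAdmInv_right_iff hmax hs, zero_add, add_zero]
  rw [wordAi, sum_range_add, sum_range_succ, sum_congr rfl hleft, hcenter, sum_congr rfl hright,
    sum_add_distrib, wordAi, wordAi]
  ring

lemma wordDes_split_of_max (hmax : ∀ i < p + 1 + b, i ≠ p → W i < W p) :
    wordDes W (p + 1 + b) = wordDes W p + wordDes (fun t => W (p + 1 + t)) b
      + if 0 < b then 1 else 0 := by
  have hleft : ∀ i ∈ range p, (if i + 1 < p + 1 + b ∧ W (i + 1) < W i then 1 else 0) =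
      if i + 1 < p ∧ W (i + 1) < W i then 1 else 0 := fun i hi => by
    rw [mem_range] at hi
    refine if_congr ⟨fun ⟨_, h⟩ => ⟨?_, h⟩, fun ⟨_, h⟩ => ⟨by omega, h⟩⟩ rfl rfl
    by_contra hp
    exact absurd (hmax i (by omega) (by omega)) (by rw [show i + 1 = p by omega] at h; omega)
  have hcenter : (if p + 1 < p + 1 + b ∧ W (p + 1) < W p then 1 else 0) =
      if 0 < b then 1 else 0 :=
    if_congr ⟨fun _ => by omega, fun _ => ⟨by omega, hmax _ (by omega) (by omega)⟩⟩ rfl rfl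
  have hright : ∀ t ∈ range b,
      (if p + 1 + t + 1 < p + 1 + b ∧ W (p + 1 + t + 1) < W (p + 1 + t) then 1 else 0) =
      if t + 1 < b ∧ W (p + 1 + (t + 1)) < W (p + 1 + t) then 1 else 0 := fun t _ => by
    simp only [← add_assoc, show p + 1 + t + 1 < p + 1 + b ↔ t + 1 < b by omega]
  rw [wordDes, sum_range_add, sum_range_succ, sum_congr rfl hleft, hcenter, sum_congr rfl hright,
    wordDes, wordDes]
  ring

end SplitAtMax

noncomputable def crossings (m : ℕ) (S : Finset ℕ) : ℕ :=
  ∑ x ∈ S, #{y ∈ range m \ S | x < y}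

lemma crossings_succ_of_subset {m : ℕ} {S : Finset ℕ} (hS : S ⊆ range m) :
    crossings (m + 1) S = crossings m S + #S := by
  have hm : m ∉ S := fun h => by simpa using hS h
  rw [crossings, crossings, card_eq_sum_ones, ← sum_add_distrib]
  refine sum_congr rfl fun x hx => ?_
  have hxm : x < m := by simpa using hS hx
  rw [range_add_one, insert_sdiff_of_notMem _ hm, filter_insert, if_pos hxm,
    card_insert_of_notMem (by simp)]

lemma crossings_succ_insert {m : ℕ} {S : Finset ℕ} (hS : S ⊆ range m) :
    crossings (m + 1) (insert m S) = crossings m S := by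
  have hm : m ∉ S := fun h => by simpa using hS h
  have hcompl : range (m + 1) \ insert m S = range m \ S := by
    rw [range_add_one, insert_sdiff_insert, sdiff_insert_of_notMem (by simp)]
  rw [crossings, sum_insert hm, hcompl, crossings, add_eq_right, card_eq_zero,
    filter_eq_empty_iff]
  simp only [mem_sdiff, mem_range, not_lt]
  omega

lemma sum_powersetCard_succ_insert {α β : Type*} [DecidableEq α] [AddCommMonoid β] {a : α}
    {s : Finset α} (ha : a ∉ s) (k : ℕ) (f : Finset α → β) :
    ∑ t ∈ (insert a s).powersetCard (k + 1), f t =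
      ∑ t ∈ s.powersetCard (k + 1), f t + ∑ t ∈ s.powersetCard k, f (insert a t) := by
  rw [powersetCard_succ_insert ha, sum_union, sum_image]
  · exact insert_erase_invOn.2.injOn.mono fun t ht ↦ notMem_mono (mem_powersetCard.1 ht).1 ha
  · aesop (add simp [disjoint_left, insert_subset_iff, mem_powersetCard])

lemma sum_powersetCard_X_pow_crossings (m k : ℕ) :
    ∑ S ∈ (range m).powersetCard k, (X : ℤ[X]) ^ crossings m S = qBinom m k := by
  induction m generalizing k with
  | zero => cases k <;> simp [qBinom, crossings]
  | succ m ih =>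
    cases k with
    | zero => simp [qBinom, crossings]
    | succ k =>
      have hsub : ∀ {j}, ∀ S ∈ (range m).powersetCard j, S ⊆ range m :=
        fun S hS => (mem_powersetCard.1 hS).1
      rw [range_add_one, sum_powersetCard_succ_insert (by simp), qBinom, ← ih, ← ih, mul_sum,
        add_comm]
      congr 1
      · exact sum_congr rfl fun S hS => by rw [crossings_succ_insert (hsub S hS)]
      · refine sum_congr rfl fun S hS => ?_
        rw [crossings_succ_of_subset (hsub S hS), (mem_powersetCard.1 hS).2, pow_add, mul_comm]

lemma qBinom_eq_zero_of_lt : ∀ {m k : ℕ}, m < k → qBinom m k = 0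
  | 0, _ + 1, _ => rfl
  | m + 1, k + 1, h => by
    rw [qBinom, qBinom_eq_zero_of_lt (by omega), qBinom_eq_zero_of_lt (by omega), mul_zero,
      add_zero]

lemma qBinom_self : ∀ m : ℕ, qBinom m m = 1
  | 0 => rfl
  | m + 1 => by rw [qBinom, qBinom_self m, qBinom_eq_zero_of_lt (by omega), mul_zero, add_zero]

section Standardization

variable {α : Type*} [LinearOrder α] {s : Finset α} {k : ℕ} (h : #s = k)

lemma sum_orderIsoOfFin_perm {M : Type*} [AddCommMonoid M] (σ : Perm (Fin k)) (g : α → M) :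
    ∑ i, g (s.orderIsoOfFin h (σ i)) = ∑ x ∈ s, g x := by
  rw [Equiv.sum_comp σ (fun i => g (s.orderIsoOfFin h i)), ← sum_coe_sort s]
  exact Fintype.sum_equiv (s.orderIsoOfFin h).toEquiv _ _ fun _ => rfl

noncomputable def standardPerm (f : Fin k → α) (hf : Function.Injective f)
    (hfs : ∀ i, f i ∈ s) : Perm (Fin k) :=
  Equiv.ofBijective (fun i => (s.orderIsoOfFin h).symm ⟨f i, hfs i⟩)
    (Finite.injective_iff_bijective.1 fun _ _ hij =>
      hf (congrArg Subtype.val ((s.orderIsoOfFin h).symm.injective hij)))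

@[simp]
lemma orderIsoOfFin_standardPerm (f : Fin k → α) (hf : Function.Injective f)
    (hfs : ∀ i, f i ∈ s) (i : Fin k) :
    (s.orderIsoOfFin h (standardPerm h f hf hfs i) : α) = f i := by
  simp [standardPerm]

end Standardization

section Merge

variable {p b : ℕ} {S : Finset ℕ}

lemma card_range_sdiff_of_mem_powersetCard (hS : S ∈ (range (p + b)).powersetCard b) :
    #(range (p + b) \ S) = p := by
  rw [mem_powersetCard] at hS
  rw [card_sdiff_of_subset hS.1, card_range, hS.2, Nat.add_sub_cancel]

noncomputable def leftIso (hS : S ∈ (range (p + b)).powersetCard b) :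
    Fin p ≃o (range (p + b) \ S : Finset ℕ) :=
  (range (p + b) \ S).orderIsoOfFin (card_range_sdiff_of_mem_powersetCard hS)

noncomputable def rightIso (hS : S ∈ (range (p + b)).powersetCard b) : Fin b ≃o S :=
  S.orderIsoOfFin (mem_powersetCard.1 hS).2

variable (hS : S ∈ (range (p + b)).powersetCard b) (α : Perm (Fin p)) (β : Perm (Fin b))

noncomputable def mergeWord (i : ℕ) : ℕ :=
  if h : i < p then leftIso hS (α ⟨i, h⟩)
  else if h' : p < i ∧ i < p + 1 + b then rightIso hS (β ⟨i - (p + 1), by omega⟩)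
  else p + b

lemma mergeWord_of_lt (i : Fin p) : mergeWord hS α β i = leftIso hS (α i) := by
  simp [mergeWord]

lemma mergeWord_self : mergeWord hS α β p = p + b := by
  simp [mergeWord]

lemma mergeWord_natAdd (t : Fin b) : mergeWord hS α β (p + 1 + t) = rightIso hS (β t) := by
  rw [mergeWord, dif_neg (by omega), dif_pos (by omega)]
  simp

lemma leftIso_lt (x : Fin p) : (leftIso hS x : ℕ) < p + b := by
  simpa using (mem_sdiff.1 (leftIso hS x).2).1

lemma rightIso_lt (t : Fin b) : (rightIso hS t : ℕ) < p + b := by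
  simpa using (mem_powersetCard.1 hS).1 (rightIso hS t).2

lemma mergeWord_lt_of_ne {i : ℕ} (hi : i < p + 1 + b) (hne : i ≠ p) :
    mergeWord hS α β i < p + b := by
  rcases lt_or_gt_of_ne hne with h | h
  · simpa [mergeWord, h] using leftIso_lt hS (α ⟨i, h⟩)
  · obtain ⟨t, rfl⟩ : ∃ t : Fin b, p + 1 + (t : ℕ) = i :=
      ⟨⟨i - (p + 1), by omega⟩, by simp; omega⟩
    rw [mergeWord_natAdd]
    exact rightIso_lt hS _

lemma mergeWord_lt (i : ℕ) : mergeWord hS α β i < p + 1 + b := by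
  unfold mergeWord
  split_ifs
  · have := leftIso_lt hS (α ⟨i, ‹_›⟩); omega
  · have := rightIso_lt hS (β ⟨i - (p + 1), by omega⟩); omega
  · omega

lemma exists_mergeWord_eq {v : ℕ} (hv : v < p + 1 + b) :
    ∃ i < p + 1 + b, mergeWord hS α β i = v := by
  by_cases hvS : v ∈ S
  · refine ⟨p + 1 + β.symm ((rightIso hS).symm ⟨v, hvS⟩), by omega, ?_⟩
    simp [mergeWord_natAdd]
  by_cases hvmax : v = p + b
  · exact ⟨p, by omega, by rw [mergeWord_self, hvmax]⟩
  have hvA : v ∈ range (p + b) \ S := mem_sdiff.2 ⟨mem_range.2 (by omega), hvS⟩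
  refine ⟨α.symm ((leftIso hS).symm ⟨v, hvA⟩), by omega, ?_⟩
  simp [mergeWord_of_lt]

noncomputable def mergePerm : Perm (Fin (p + 1 + b)) :=
  Equiv.ofBijective (fun i => ⟨mergeWord hS α β i, mergeWord_lt hS α β i⟩)
    (Finite.surjective_iff_bijective.1 fun v => by
      obtain ⟨i, hi, hiv⟩ := exists_mergeWord_eq hS α β v.2
      exact ⟨⟨i, hi⟩, Fin.ext hiv⟩)

@[simp]
lemma mergePerm_apply_val (i : Fin (p + 1 + b)) :
    (mergePerm hS α β i : ℕ) = mergeWord hS α β i := rfl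

lemma mergePerm_apply_self : mergePerm hS α β ⟨p, by omega⟩ = ⟨p + b, by omega⟩ :=
  Fin.ext (mergeWord_self hS α β)

lemma mem_iff_exists_mergePerm_natAdd {x : ℕ} :
    x ∈ S ↔ ∃ t : Fin b, (mergePerm hS α β (Fin.natAdd (p + 1) t) : ℕ) = x := by
  simp only [mergePerm_apply_val, Fin.val_natAdd, mergeWord_natAdd]
  exact ⟨fun hx => ⟨β.symm ((rightIso hS).symm ⟨x, hx⟩), by simp⟩,
    fun ⟨t, ht⟩ => ht ▸ (rightIso hS (β t)).2⟩

lemma sum_mergeWord_lt_eq_crossings :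
    ∑ i ∈ range p, ∑ t ∈ range b,
      (if mergeWord hS α β (p + 1 + t) < mergeWord hS α β i then 1 else 0) =
      crossings (p + b) S := by
  calc _ = ∑ i : Fin p, ∑ t : Fin b,
        if (rightIso hS (β t) : ℕ) < leftIso hS (α i) then 1 else 0 := by
        simp only [sum_range, mergeWord_of_lt, mergeWord_natAdd]
    _ = ∑ i : Fin p, ∑ x ∈ S, if x < (leftIso hS (α i) : ℕ) then 1 else 0 :=
        sum_congr rfl fun i _ => sum_orderIsoOfFin_perm _ β fun x => if x < _ then 1 else 0
    _ = ∑ a ∈ range (p + b) \ S, ∑ x ∈ S, if x < a then 1 else 0 :=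
        sum_orderIsoOfFin_perm _ α fun a => ∑ x ∈ S, if x < a then 1 else 0
    _ = crossings (p + b) S := by
        rw [sum_comm, crossings]
        simp only [card_filter]

lemma aidP_mergePerm :
    aidP (mergePerm hS α β) = aidP α + aidP β + crossings (p + b) S
      + ((if 0 < p then b else 0) + if 0 < b then 1 else 0) := by
  have hmax : ∀ i < p + 1 + b, i ≠ p → mergeWord hS α β i < mergeWord hS α β p :=
    fun i hi hne => by rw [mergeWord_self]; exact mergeWord_lt_of_ne hS α β hi hne
  have hσ := aidP_eq_wordAi_add_wordDes (mergePerm hS α β) (mergeWord hS α β)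
    fun _ _ => Iff.rfl
  have hα := aidP_eq_wordAi_add_wordDes α (mergeWord hS α β) fun i j => by
    simp [mergeWord_of_lt]
  have hβ := aidP_eq_wordAi_add_wordDes β (fun t => mergeWord hS α β (p + 1 + t)) fun s t => by
    simp [mergeWord_natAdd]
  rw [hσ, hα, hβ, wordAi_split_of_max hmax, wordDes_split_of_max hmax,
    ← sum_mergeWord_lt_eq_crossings hS α β]
  ring

end Merge

lemma eq_of_mergePerm_eq {p b : ℕ} {S S' : Finset ℕ} (hS : S ∈ (range (p + b)).powersetCard b)
    (hS' : S' ∈ (range (p + b)).powersetCard b) {α α' : Perm (Fin p)} {β β' : Perm (Fin b)}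
    (h : mergePerm hS α β = mergePerm hS' α' β') : S = S' ∧ α = α' ∧ β = β' := by
  obtain rfl : S = S' := by
    ext x
    rw [mem_iff_exists_mergePerm_natAdd hS α β, mem_iff_exists_mergePerm_natAdd hS' α' β', h]
  have hval : ∀ i (hi : i < p + 1 + b), mergeWord hS α β i = mergeWord hS α' β' i :=
    fun i hi => congrArg (fun σ : Perm (Fin (p + 1 + b)) => (σ ⟨i, hi⟩ : ℕ)) h
  refine ⟨rfl, Equiv.ext fun i => ?_, Equiv.ext fun t => ?_⟩
  · have := hval i (by omega)
    rw [mergeWord_of_lt, mergeWord_of_lt] at this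
    exact (leftIso hS).injective (Subtype.ext this)
  · have := hval (p + 1 + t) (by omega)
    rw [mergeWord_natAdd, mergeWord_natAdd] at this
    exact (rightIso hS).injective (Subtype.ext this)

section Unmerge

variable {p b : ℕ} {σ : Perm (Fin (p + 1 + b))}

variable (σ) in
noncomputable def rightValues : Finset ℕ :=
  univ.image fun t : Fin b => (σ (Fin.natAdd (p + 1) t) : ℕ)

lemma val_lt_of_ne_max (hσ : σ ⟨p, by omega⟩ = ⟨p + b, by omega⟩) {x : Fin (p + 1 + b)}
    (hx : (x : ℕ) ≠ p) : (σ x : ℕ) < p + b := by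
  have hne : (σ x : ℕ) ≠ p + b := fun h =>
    hx (congrArg Fin.val (σ.injective (Fin.ext (h.trans (congrArg Fin.val hσ).symm))))
  have := (σ x).2
  omega

lemma rightValues_mem_powersetCard (hσ : σ ⟨p, by omega⟩ = ⟨p + b, by omega⟩) :
    rightValues σ ∈ (range (p + b)).powersetCard b := by
  refine mem_powersetCard.2 ⟨fun x hx => ?_, ?_⟩
  · obtain ⟨t, -, rfl⟩ := mem_image.1 hx
    exact mem_range.2 (val_lt_of_ne_max hσ (by simp only [Fin.val_natAdd]; omega))
  · rw [rightValues, card_image_of_injective _ fun s t h => ?_, card_univ, Fintype.card_fin]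
    exact Fin.natAdd_injective _ _ (σ.injective (Fin.ext h))

lemma exists_mergePerm_eq (hσ : σ ⟨p, by omega⟩ = ⟨p + b, by omega⟩) :
    ∃ (α : Perm (Fin p)) (β : Perm (Fin b)),
      mergePerm (rightValues_mem_powersetCard hσ) α β = σ := by
  set hS := rightValues_mem_powersetCard hσ
  let left : Fin p → Fin (p + 1 + b) := Fin.castLE (by omega)
  have hleft : ∀ i, (σ (left i) : ℕ) ∈ range (p + b) \ rightValues σ := fun i => by
    refine mem_sdiff.2 ⟨mem_range.2 (val_lt_of_ne_max hσ (by simp [left]; omega)), fun h => ?_⟩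
    obtain ⟨t, -, ht⟩ := mem_image.1 h
    have := congrArg Fin.val (σ.injective (Fin.ext ht))
    simp [left] at this
    omega
  have hleft_inj : Function.Injective fun i => (σ (left i) : ℕ) := fun i j h =>
    Fin.castLE_injective _ (σ.injective (Fin.ext h))
  have hright_inj : Function.Injective fun t => (σ (Fin.natAdd (p + 1) t) : ℕ) := fun s t h =>
    Fin.natAdd_injective _ _ (σ.injective (Fin.ext h))
  have hright : ∀ t, (σ (Fin.natAdd (p + 1) t) : ℕ) ∈ rightValues σ := fun t =>
    mem_image_of_mem _ (mem_univ t)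
  refine ⟨standardPerm (card_range_sdiff_of_mem_powersetCard hS) _ hleft_inj hleft,
    standardPerm (mem_powersetCard.1 hS).2 _ hright_inj hright, Equiv.ext fun i => Fin.ext ?_⟩
  rw [mergePerm_apply_val]
  rcases lt_trichotomy (i : ℕ) p with h | h | h
  · rw [show (i : ℕ) = ((⟨i, h⟩ : Fin p) : ℕ) from rfl, mergeWord_of_lt, leftIso,
      orderIsoOfFin_standardPerm]
    rfl
  · rw [h, mergeWord_self, show i = ⟨p, by omega⟩ from Fin.ext h, hσ]
  · obtain ⟨t, rfl⟩ : ∃ t : Fin b, Fin.natAdd (p + 1) t = i :=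
      ⟨⟨i - (p + 1), by omega⟩, Fin.ext (by simp; omega)⟩
    rw [Fin.val_natAdd, mergeWord_natAdd, rightIso, orderIsoOfFin_standardPerm]

end Unmerge

lemma sum_X_pow_aidP_filter_apply_eq_max (p b : ℕ) :
    ∑ σ ∈ univ.filter
        (fun σ : Perm (Fin (p + 1 + b)) => σ ⟨p, by omega⟩ = ⟨p + b, by omega⟩),
      (X : ℤ[X]) ^ aidP σ =
      (∑ S ∈ (range (p + b)).powersetCard b, (X : ℤ[X]) ^ crossings (p + b) S)
        * X ^ ((if 0 < p then b else 0) + if 0 < b then 1 else 0) * aidGen p * aidGen b := by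
  set c := (if 0 < p then b else 0) + if 0 < b then 1 else 0
  have hbij :
      ∑ x ∈ (range (p + b)).powersetCard b ×ˢ (univ : Finset (Perm (Fin p) × Perm (Fin b))),
        (X : ℤ[X]) ^ (aidP x.2.1 + aidP x.2.2 + crossings (p + b) x.1 + c) =
      ∑ σ ∈ univ.filter
          (fun σ : Perm (Fin (p + 1 + b)) => σ ⟨p, by omega⟩ = ⟨p + b, by omega⟩),
        (X : ℤ[X]) ^ aidP σ := by
    refine sum_bij (fun x hx => mergePerm (mem_product.1 hx).1 x.2.1 x.2.2)
      (fun _ _ => mem_filter.2 ⟨mem_univ _, mergePerm_apply_self _ _ _⟩)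
      (fun _ _ _ _ h => ?_) (fun σ hσ => ?_) (fun _ _ => by rw [aidP_mergePerm])
    · obtain ⟨hS, hα, hβ⟩ := eq_of_mergePerm_eq _ _ h
      exact Prod.ext hS (Prod.ext hα hβ)
    · obtain ⟨α, β, h⟩ := exists_mergePerm_eq (mem_filter.1 hσ).2
      exact ⟨(rightValues σ, α, β),
        mem_product.2 ⟨rightValues_mem_powersetCard (mem_filter.1 hσ).2, mem_univ _⟩, h⟩
  rw [← hbij, sum_product, mul_assoc, mul_assoc, sum_mul]
  refine sum_congr rfl fun S _ => ?_
  rw [aidGen, aidGen, sum_mul_sum, ← Fintype.sum_prod_type', mul_sum, mul_sum]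
  exact sum_congr rfl fun x _ => by ring

lemma aidGen_zero : aidGen 0 = 1 := by
  simp [aidGen, aidP_eq_wordAi_add_wordDes _ id finZeroElim, wordAi, wordDes]

/-- recurrence in Proposition 6.3 of Linusson–Shareshian–Wachs: for
`n ≥ 2` and `j ∈ [n]`, the sum `∑ q^{aid σ}` over all `σ ∈ S_n` with `σ(n-j+1) = n`
equals `F_{n-1}(q)` if `j = 1`; `q F_{n-1}(q)` if `j = n`; and
`[n-1 choose j-1]_q q^j F_{j-1}(q) F_{n-j}(q)` if `2 ≤ j ≤ n-1`.
(Positions and values are 1-indexed, so `σ(n-j+1) = n` reads `σ ⟨n-j⟩ = ⟨n-1⟩` in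
0-indexed terms.) -/
theorem statement_11 (n : ℕ) (j : ℕ) (hj1 : 1 ≤ j) (hjn : j ≤ n) :
    (∑ σ ∈ Finset.univ.filter
        (fun σ : Equiv.Perm (Fin n) => σ ⟨n - j, by omega⟩ = ⟨n - 1, by omega⟩),
      (Polynomial.X : Polynomial ℤ) ^ aidP σ) =
      if j = 1 then aidGen (n - 1)
      else if j = n then Polynomial.X * aidGen (n - 1)
      else qBinom (n - 1) (j - 1) * Polynomial.X ^ j * aidGen (j - 1) * aidGen (n - j) := by
  obtain ⟨p, b, rfl, rfl⟩ : ∃ p b, n = p + 1 + b ∧ j = b + 1 :=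
    ⟨n - j, j - 1, by omega, by omega⟩
  simp only [show p + 1 + b - (b + 1) = p by omega, show p + 1 + b - 1 = p + b by omega,
    Nat.add_sub_cancel]
  rw [sum_X_pow_aidP_filter_apply_eq_max, sum_powersetCard_X_pow_crossings]
  rcases Nat.eq_zero_or_pos b with rfl | hb
  · simp [qBinom, aidGen_zero]
  rcases Nat.eq_zero_or_pos p with rfl | hp
  · rw [if_neg (show b + 1 ≠ 1 by omega), if_pos (show b + 1 = 0 + 1 + b by omega), if_pos hb]
    simp [qBinom_self, aidGen_zero]
  rw [if_neg (show b + 1 ≠ 1 by omega), if_neg (show b + 1 ≠ p + 1 + b by omega), if_pos hp,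
    if_pos hb]
  ring
end

section
/- For all positive integers m and n, the sum of t^{bars(w)} over all banners w of length n with underlying word |w| ∈ [m]^n equals Σ_{k=0}^{n−1} C(n−1,k)·t^k·Σ_{u ∈ [m]^{n−k}} t^{des(u)}, as polynomials in t. -/
attribute [local instance] Classical.propDecidable

open Polynomial

/-- The number of barred letters of a barred word whose bars are recorded by `b`. -/
noncomputable def barsCount {n : ℕ} (b : Fin n → Bool) : ℕ :=
  (Finset.univ.filter fun i : Fin n => b i = true).card

/-- The barred word with underlying word `v` and bars recorded by `b` is a banner:
the last letter is unbarred; if `|w_i| < |w_{i+1}|` then `w_i` is unbarred; and if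
`|w_i| > |w_{i+1}|` then `w_i` is barred. -/
def IsBanner {n : ℕ} (v : Fin n → ℕ) (b : Fin n → Bool) : Prop :=
  (∀ _ : 0 < n, b ⟨n - 1, by omega⟩ = false) ∧
    (∀ i : ℕ, ∀ h : i + 1 < n, v ⟨i, by omega⟩ < v ⟨i + 1, h⟩ → b ⟨i, by omega⟩ = false) ∧
    ∀ i : ℕ, ∀ h : i + 1 < n, v ⟨i + 1, h⟩ < v ⟨i, by omega⟩ → b ⟨i, by omega⟩ = true

/-! For a fixed underlying word `v`, the banner conditions force the bar at each strict ascent,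
each strict descent and the last letter, and leave it free at each plateau `v i = v (i + 1)`; so
the bars contribute `t ^ des v * (1 + t) ^ plat v`, where `plat v` counts plateaus. Summing over
words is a transfer-matrix computation: if `M s` is the `[m] × [m]` matrix with entries `t` below
the diagonal, `s` on it and `1` above it, then `∑ v, t ^ des v * s ^ plat v` over words of length
`ℓ + 1` is the sum of the entries of `M s ^ ℓ *ᵥ 1`. As `M (1 + t) = t • 1 + M 1` and `t • 1` is
central, the binomial theorem gives `M (1 + t) ^ ℓ = ∑ k, C(ℓ, k) t ^ k M 1 ^ (ℓ - k)`, which is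
the formula. -/

open Finset

theorem Fintype.sum_piFinset_fin_succ {α M : Type*} [AddCommMonoid M] (S : Finset α) (ℓ : ℕ)
    (f : (Fin (ℓ + 1) → α) → M) :
    ∑ v ∈ Fintype.piFinset (fun _ : Fin (ℓ + 1) => S), f v =
      ∑ a ∈ S, ∑ w ∈ Fintype.piFinset (fun _ : Fin ℓ => S), f (Fin.cons a w) := by
  have h := filter_piFinset_eq_map_consEquiv (fun _ : Fin (ℓ + 1) => S) (fun _ => True)
  simp only [filter_true] at h
  rw [h, sum_map, sum_product]
  rfl

noncomputable def plateauCount {m : ℕ} (w : Fin m → ℕ) : ℕ :=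
  (Finset.univ.filter fun i : Fin (m - 1) =>
      w ⟨(i : ℕ) + 1, by have := i.2; omega⟩ = w ⟨(i : ℕ), by have := i.2; omega⟩).card

theorem desF_eq_card {ℓ : ℕ} (w : Fin (ℓ + 1) → ℕ) :
    desF w = #{i : Fin ℓ | w i.succ < w i.castSucc} :=
  rfl

theorem plateauCount_eq_card {ℓ : ℕ} (w : Fin (ℓ + 1) → ℕ) :
    plateauCount w = #{i : Fin ℓ | w i.succ = w i.castSucc} :=
  rfl

theorem desF_fin_one (w : Fin 1 → ℕ) : desF w = 0 := by
  simp [desF_eq_card]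

theorem plateauCount_fin_one (w : Fin 1 → ℕ) : plateauCount w = 0 := by
  simp [plateauCount_eq_card]

theorem desF_cons {ℓ : ℕ} (a : ℕ) (w : Fin (ℓ + 1) → ℕ) :
    desF (Fin.cons a w : Fin (ℓ + 2) → ℕ) = (if w 0 < a then 1 else 0) + desF w := by
  simp only [desF_eq_card, card_filter, Fin.sum_univ_succ, ← Fin.succ_castSucc, Fin.cons_succ]
  rfl

theorem plateauCount_cons {ℓ : ℕ} (a : ℕ) (w : Fin (ℓ + 1) → ℕ) :
    plateauCount (Fin.cons a w : Fin (ℓ + 2) → ℕ) =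
      (if w 0 = a then 1 else 0) + plateauCount w := by
  simp only [plateauCount_eq_card, card_filter, Fin.sum_univ_succ, ← Fin.succ_castSucc,
    Fin.cons_succ]
  rfl

theorem barsCount_cons {n : ℕ} (β : Bool) (b : Fin n → Bool) :
    barsCount (Fin.cons β b : Fin (n + 1) → Bool) = β.toNat + barsCount b := by
  simp only [barsCount, card_filter, Fin.sum_univ_succ, Fin.cons_zero, Fin.cons_succ]
  cases β <;> rfl

def IsBannerStep (a c : ℕ) (β : Bool) : Prop :=
  (a < c → β = false) ∧ (c < a → β = true)

theorem isBanner_fin_one_iff (v : Fin 1 → ℕ) (b : Fin 1 → Bool) :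
    IsBanner v b ↔ b 0 = false := by
  simp [IsBanner]

theorem isBanner_cons_iff {ℓ : ℕ} (a : ℕ) (v : Fin (ℓ + 1) → ℕ) (β : Bool)
    (b : Fin (ℓ + 1) → Bool) :
    IsBanner (Fin.cons a v : Fin (ℓ + 2) → ℕ) (Fin.cons β b) ↔
      IsBannerStep a (v 0) β ∧ IsBanner v b := by
  have h₀ : 0 + 1 < ℓ + 2 := by omega
  constructor
  · rintro ⟨hlast, hasc, hdesc⟩
    exact ⟨⟨hasc 0 h₀, hdesc 0 h₀⟩, fun _ => hlast (by omega),
      fun i h => hasc (i + 1) (by omega), fun i h => hdesc (i + 1) (by omega)⟩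
  · rintro ⟨⟨hasc₀, hdesc₀⟩, hlast, hasc, hdesc⟩
    refine ⟨fun _ => hlast (by omega), fun i h => ?_, fun i h => ?_⟩
    · cases i with
      | zero => exact hasc₀
      | succ i => exact hasc i (by omega)
    · cases i with
      | zero => exact hdesc₀
      | succ i => exact hdesc i (by omega)

section Weights

open Matrix

variable {R : Type*} [CommSemiring R]

def descentWeight (t s : R) (a b : ℕ) : R :=
  if b < a then t else if b = a then s else 1

theorem pow_desF_mul_pow_plateauCount_cons {ℓ : ℕ} (t s : R) (a : ℕ) (w : Fin (ℓ + 1) → ℕ) :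
    t ^ desF (Fin.cons a w : Fin (ℓ + 2) → ℕ) * s ^ plateauCount (Fin.cons a w : Fin (ℓ + 2) → ℕ) =
      descentWeight t s a (w 0) * (t ^ desF w * s ^ plateauCount w) := by
  rw [desF_cons, plateauCount_cons, descentWeight]
  rcases lt_trichotomy (w 0) a with h | rfl | h
  · simp [h, h.ne, pow_add, mul_assoc]
  · simp [pow_add]
    ring
  · simp [h.ne', not_lt_of_gt h]

theorem sum_isBannerStep_pow (t : R) (a c : ℕ) :
    ∑ β : Bool, (if IsBannerStep a c β then t ^ β.toNat else 0) = descentWeight t (1 + t) a c := by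
  rcases lt_trichotomy c a with h | rfl | h
  · simp [IsBannerStep, descentWeight, h, not_lt_of_gt h]
  · simp [IsBannerStep, descentWeight, add_comm]
  · simp [IsBannerStep, descentWeight, h, not_lt_of_gt h, h.ne']

theorem sum_isBanner_pow_barsCount (t : R) {ℓ : ℕ} (v : Fin (ℓ + 1) → ℕ) :
    ∑ b : Fin (ℓ + 1) → Bool, (if IsBanner v b then t ^ barsCount b else 0) =
      t ^ desF v * (1 + t) ^ plateauCount v := by
  induction ℓ with
  | zero =>
    rw [← (Equiv.funUnique (Fin 1) Bool).symm.sum_comp]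
    simp [isBanner_fin_one_iff, desF_fin_one, plateauCount_fin_one, barsCount]
  | succ ℓ ih =>
    rw [← Fintype.piFinset_univ, Fintype.sum_piFinset_fin_succ, Fintype.piFinset_univ,
      ← Fin.cons_self_tail v, pow_desF_mul_pow_plateauCount_cons, ← ih, ← sum_isBannerStep_pow,
      sum_mul_sum]
    refine sum_congr rfl fun β _ => sum_congr rfl fun b _ => ?_
    simp only [isBanner_cons_iff, barsCount_cons, pow_add, ite_zero_mul_ite_zero]

def descentMatrix (S : Finset ℕ) (t s : R) : Matrix S S R :=
  Matrix.of fun a b => descentWeight t s a b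

theorem sum_cons_eq_descentMatrix_pow_mulVec (S : Finset ℕ) (t s : R) (j : ℕ) (a : S) :
    ∑ u ∈ Fintype.piFinset (fun _ : Fin j => S),
        t ^ desF (Fin.cons (a : ℕ) u : Fin (j + 1) → ℕ) *
          s ^ plateauCount (Fin.cons (a : ℕ) u : Fin (j + 1) → ℕ) =
      (descentMatrix S t s ^ j *ᵥ 1) a := by
  induction j generalizing a with
  | zero => simp [desF_fin_one, plateauCount_fin_one]
  | succ j ih =>
    rw [pow_succ', ← mulVec_mulVec, Fintype.sum_piFinset_fin_succ, ← sum_coe_sort S]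
    simp only [pow_desF_mul_pow_plateauCount_cons, Fin.cons_zero, ← mul_sum, ih]
    rfl

theorem sum_pow_desF_mul_pow_plateauCount (S : Finset ℕ) (t s : R) (ℓ : ℕ) :
    ∑ v ∈ Fintype.piFinset (fun _ : Fin (ℓ + 1) => S), t ^ desF v * s ^ plateauCount v =
      ∑ a : S, (descentMatrix S t s ^ ℓ *ᵥ 1) a := by
  rw [Fintype.sum_piFinset_fin_succ, ← sum_coe_sort S]
  simp only [sum_cons_eq_descentMatrix_pow_mulVec]

theorem descentMatrix_one_add (S : Finset ℕ) (t : R) :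
    descentMatrix S t (1 + t) = algebraMap R (Matrix S S R) t + descentMatrix S t 1 := by
  ext a b
  simp only [descentMatrix, descentWeight, Matrix.add_apply, of_apply, algebraMap_matrix_apply,
    Algebra.algebraMap_self, RingHom.id_apply]
  rcases lt_trichotomy (b : ℕ) a with h | h | h
  · simp [h, Subtype.coe_ne_coe.mp h.ne']
  · simp [Subtype.ext h, add_comm]
  · simp [Subtype.coe_ne_coe.mp h.ne, Subtype.coe_ne_coe.mp h.ne', not_lt_of_gt h]

theorem descentMatrix_one_add_pow (S : Finset ℕ) (t : R) (ℓ : ℕ) :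
    descentMatrix S t (1 + t) ^ ℓ =
      ∑ k ∈ range (ℓ + 1), (ℓ.choose k * t ^ k) • descentMatrix S t 1 ^ (ℓ - k) := by
  rw [descentMatrix_one_add, (Algebra.commute_algebraMap_left t _).add_pow]
  refine sum_congr rfl fun k _ => ?_
  rw [Algebra.smul_def, map_mul, map_natCast, map_pow, Nat.cast_comm, mul_assoc, mul_assoc,
    Nat.cast_comm]

theorem sum_pow_desF_mul_one_add_pow_plateauCount (S : Finset ℕ) (t : R) (ℓ : ℕ) :
    ∑ v ∈ Fintype.piFinset (fun _ : Fin (ℓ + 1) => S), t ^ desF v * (1 + t) ^ plateauCount v =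
      ∑ k ∈ range (ℓ + 1), ℓ.choose k * t ^ k *
        ∑ u ∈ Fintype.piFinset (fun _ : Fin (ℓ - k + 1) => S), t ^ desF u := by
  have descents (j : ℕ) := sum_pow_desF_mul_pow_plateauCount S t 1 j
  simp only [one_pow, mul_one] at descents
  rw [sum_pow_desF_mul_pow_plateauCount, descentMatrix_one_add_pow, sum_mulVec]
  simp only [Finset.sum_apply, smul_mulVec, Pi.smul_apply, smul_eq_mul, descents, mul_sum]
  exact sum_comm

end Weights

theorem statement_13_general (m n : ℕ) (hn : 0 < n) :
    (∑ v ∈ Fintype.piFinset (fun _ : Fin n => Finset.Icc 1 m),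
        ∑ b : Fin n → Bool,
          if IsBanner v b then (X : Polynomial ℤ) ^ barsCount b else 0) =
      ∑ k ∈ Finset.range n, ((n - 1).choose k : Polynomial ℤ) * (X : Polynomial ℤ) ^ k *
        ∑ u ∈ Fintype.piFinset (fun _ : Fin (n - k) => Finset.Icc 1 m),
          (X : Polynomial ℤ) ^ desF u := by
  obtain ⟨ℓ, rfl⟩ : ∃ ℓ, n = ℓ + 1 := ⟨n - 1, by omega⟩
  simp only [sum_isBanner_pow_barsCount, sum_pow_desF_mul_one_add_pow_plateauCount,
    Nat.add_sub_cancel]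
  refine sum_congr rfl fun k hk => ?_
  rw [Nat.sub_add_comm (mem_range_succ_iff.mp hk)]

/-- eq. (8.9) of Linusson–Shareshian–Wachs: for `m, n ≥ 1`, the sum
of `t^{bars w}` over all banners `w` of length `n` with underlying word `|w| ∈ [m]^n`
equals `∑_{k=0}^{n-1} C(n-1,k) t^k ∑_{u ∈ [m]^{n-k}} t^{des u}` in `ℤ[t]`. -/
theorem statement_13 (m n : ℕ) (hm : 0 < m) (hn : 0 < n) :
    (∑ v ∈ Fintype.piFinset (fun _ : Fin n => Finset.Icc 1 m),
        ∑ b : Fin n → Bool,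
          if IsBanner v b then (X : Polynomial ℤ) ^ barsCount b else 0) =
      ∑ k ∈ Finset.range n, ((n - 1).choose k : Polynomial ℤ) * (X : Polynomial ℤ) ^ k *
        ∑ u ∈ Fintype.piFinset (fun _ : Fin (n - k) => Finset.Icc 1 m),
          (X : Polynomial ℤ) ^ desF u :=
  statement_13_general m n hn
end

section
/- Fix n ≥ 1 and consider the set of weak compositions of n into n+1 parts, with two compositions declared cyclically equivalent if one is obtained from the other by cyclically rotating its parts. Then every cyclic equivalence class has exactly n+1 elements, and every cyclic equivalence class contains exactly one composition μ = (μ₁,…,μ_{n+1}) with μ_{n+1} = 0 and μ₁ + ⋯ + μ_j ≥ j for all j ∈ [n] (that is, exactly one representative whose first n parts form a parking composition of n). -/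
/-!
Read the composition periodically and follow its Łukasiewicz walk `W k = μ₀ + ⋯ + μ_{k-1} - k`;
one full period lowers `W` by one, because the parts sum to `n` over `n + 1` positions. A
rotation by `d` is a parking composition followed by a zero exactly when `W d` is a minimum of
`W` on the window `[d, d + n]`. Taking the smallest minimiser of `W` on one period gives such a
`d`; two of them, `a < b`, would give `W a ≤ W b ≤ W (a + n + 1) = W a - 1`. Since exactly one
rotation has the property, no two rotations coincide.
-/

open Finset

theorem cycle_lemma {p : ℕ} (W : ℕ → ℤ) (hW : ∀ k, W (k + p) = W k - 1) :
    ∃! d : Fin p, ∀ j < p, W d ≤ W (d + j) := by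
  have hp : p ≠ 0 := by
    rintro rfl
    linarith [hW 0]
  have hmin : ∃ k, k < p ∧ ∀ i < p, W k ≤ W i := by
    obtain ⟨k, hk, hkmin⟩ := (range p).exists_min_image W ⟨0, mem_range.2 (Nat.pos_of_ne_zero hp)⟩
    exact ⟨k, mem_range.1 hk, fun i hi => hkmin i (mem_range.2 hi)⟩
  classical
  obtain ⟨hdp, hdmin⟩ := Nat.find_spec hmin
  have hbefore : ∀ m < Nat.find hmin, W (Nat.find hmin) < W m := by
    intro m hm
    have hm' := Nat.find_min hmin hm
    push Not at hm'
    obtain ⟨i, hi, hlt⟩ := hm' (hm.trans hdp)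
    exact (hdmin i hi).trans_lt hlt
  have hunique : ∀ a b : ℕ, a < b → b < p →
      (∀ j < p, W a ≤ W (a + j)) → ¬∀ j < p, W b ≤ W (b + j) := by
    intro a b hab hbp ha hb
    have hab' := ha (b - a) (by omega)
    have hba := hb (a + p - b) (by omega)
    rw [Nat.add_sub_cancel' hab.le] at hab'
    rw [show b + (a + p - b) = a + p by omega, hW] at hba
    omega
  have hd : ∀ j < p, W (Nat.find hmin) ≤ W (Nat.find hmin + j) := by
    intro j hj
    rcases lt_or_ge (Nat.find hmin + j) p with h | h
    · exact hdmin _ h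
    · obtain ⟨m, hm⟩ : ∃ m, Nat.find hmin + j = m + p := ⟨Nat.find hmin + j - p, by omega⟩
      have := hbefore m (by omega)
      rw [hm, hW]
      omega
  refine ⟨⟨Nat.find hmin, hdp⟩, hd, fun e he => Fin.ext ?_⟩
  rcases lt_trichotomy e.val (Nat.find hmin) with h | h | h
  · exact absurd hd (hunique _ _ h hdp he)
  · exact h
  · exact absurd he (hunique _ _ h e.isLt hd)

theorem injective_translate_of_existsUnique {G α : Type*} [AddGroup G] {μ : G → α}
    {Q : (G → α) → Prop} (h : ∃! d, Q fun x => μ (x + d)) :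
    Function.Injective fun d x => μ (x + d) := by
  intro d d' hdd'
  obtain ⟨e, he, huniq⟩ := h
  have htranslate : (fun x => μ (x + (e + -d + d'))) = fun x => μ (x + e) := by
    funext x
    have := congrFun hdd' (x + (e + -d))
    simp only [add_assoc, neg_add_cancel, add_zero] at this
    simpa only [add_assoc] using this.symm
  have := huniq _ (htranslate ▸ he)
  rw [add_assoc, add_eq_left, neg_add_eq_zero] at this
  exact this

theorem sum_range_ofNat_add {M : Type*} [AddCommMonoid M] {m : ℕ} [NeZero m] (f : Fin m → M)
    (c : Fin m) : ∑ i ∈ range m, f (Fin.ofNat m i + c) = ∑ x, f x := by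
  rw [← Fin.sum_univ_eq_sum_range (fun i => f (Fin.ofNat m i + c))]
  simp only [Fin.ofNat_val_eq_self]
  exact Equiv.sum_comp (Equiv.addRight c) f

def lukasiewiczWalk {m : ℕ} [NeZero m] (μ : Fin m → ℕ) (k : ℕ) : ℤ :=
  (∑ i ∈ range k, μ (Fin.ofNat m i) : ℕ) - k

theorem lukasiewiczWalk_add {m : ℕ} [NeZero m] (μ : Fin m → ℕ) (k j : ℕ) :
    lukasiewiczWalk μ (k + j) =
      lukasiewiczWalk μ k + ((∑ i ∈ range j, μ (Fin.ofNat m i + Fin.ofNat m k) : ℕ) - j) := by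
  have hshift : ∀ i, Fin.ofNat m (k + i) = Fin.ofNat m i + Fin.ofNat m k := by
    intro i
    rw [Fin.ofNat_add, add_comm k]
    ext
    simp
  simp only [lukasiewiczWalk, sum_range_add, hshift]
  push_cast
  ring

theorem lukasiewiczWalk_add_period {n : ℕ} (μ : Fin (n + 1) → ℕ) (hμ : ∑ i, μ i = n) (k : ℕ) :
    lukasiewiczWalk μ (k + (n + 1)) = lukasiewiczWalk μ k - 1 := by
  rw [lukasiewiczWalk_add, sum_range_ofNat_add, hμ]
  push_cast
  ring

theorem apply_last_add_eq_zero {n : ℕ} {μ : Fin (n + 1) → ℕ} (hμ : ∑ i, μ i = n)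
    (d : Fin (n + 1)) (h : n ≤ ∑ i ∈ range n, μ (Fin.ofNat (n + 1) i + d)) :
    μ (Fin.last n + d) = 0 := by
  have hwindow := sum_range_ofNat_add μ d
  rw [sum_range_succ, hμ] at hwindow
  have hlast : Fin.ofNat (n + 1) n = Fin.last n := by ext; simp
  rw [hlast] at hwindow
  omega

theorem forall_le_sum_range_iff_lukasiewiczWalk_le {n : ℕ} (μ : Fin (n + 1) → ℕ)
    (d : Fin (n + 1)) :
    (∀ j, 1 ≤ j → j ≤ n → j ≤ ∑ i ∈ range j, μ (Fin.ofNat (n + 1) i + d)) ↔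
      ∀ j < n + 1, lukasiewiczWalk μ d ≤ lukasiewiczWalk μ (d + j) := by
  refine forall_congr' fun j => ?_
  simp only [lukasiewiczWalk_add, Fin.ofNat_val_eq_self]
  constructor
  · intro h hj
    rcases j.eq_zero_or_pos with rfl | hj0
    · simp
    · have := h hj0 (by omega)
      omega
  · intro h hj1 hjn
    have := h (by omega)
    omega

/-- from the proof of Theorem 8.1 of Linusson–Shareshian–Wachs:
for `n ≥ 1`, under cyclic rotation of parts, every cyclic equivalence class of weak
compositions of `n` into `n + 1` parts has exactly `n + 1` elements, and each class
contains exactly one composition whose last part is `0` and whose first `n` parts form a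
parking composition of `n` (i.e. `μ₁ + ⋯ + μ_j ≥ j` for all `j ∈ [n]`).
Here the rotations of `μ` are the compositions `i ↦ μ (i + d)` for `d : Fin (n+1)`. -/
theorem statement_19 (n : ℕ) (μ : Fin (n + 1) → ℕ)
    (hμ : ∑ i, μ i = n) :
    (Finset.image (fun d : Fin (n + 1) => fun i : Fin (n + 1) => μ (i + d))
        Finset.univ).card = n + 1 ∧
      ∃! d : Fin (n + 1),
        μ (⟨n, by omega⟩ + d) = 0 ∧
          ∀ j : ℕ, 1 ≤ j → j ≤ n →
            j ≤ ∑ i ∈ Finset.range j, μ (Fin.ofNat (n + 1) i + d) := by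
  have hgood : ∀ d : Fin (n + 1), (μ (Fin.last n + d) = 0 ∧ ∀ j, 1 ≤ j → j ≤ n →
      j ≤ ∑ i ∈ range j, μ (Fin.ofNat (n + 1) i + d)) ↔
        ∀ j < n + 1, lukasiewiczWalk μ d ≤ lukasiewiczWalk μ (d + j) := by
    intro d
    rw [← forall_le_sum_range_iff_lukasiewiczWalk_le]
    refine ⟨And.right, fun h => ⟨apply_last_add_eq_zero hμ d ?_, h⟩⟩
    rw [forall_le_sum_range_iff_lukasiewiczWalk_le] at h
    have := h n (by omega)
    rw [lukasiewiczWalk_add, Fin.ofNat_val_eq_self] at this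
    omega
  have huniq := (existsUnique_congr hgood).2 (cycle_lemma _ (lukasiewiczWalk_add_period μ hμ))
  have hinj := injective_translate_of_existsUnique (Q := fun ν => ν (Fin.last n) = 0 ∧
    ∀ j, 1 ≤ j → j ≤ n → j ≤ ∑ i ∈ range j, ν (Fin.ofNat (n + 1) i)) huniq
  exact ⟨by rw [card_image_of_injective _ hinj, card_univ, Fintype.card_fin], huniq⟩
end
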